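/- For L > 0 and α > 0, the first Robin eigenvalue of the interval [0, L] with Robin parameter α at both endpoints satisfies λ₁^α([0,L]) ≥ απ²/(L(π² + αL)). -/

import Mathlib

open MeasureTheory Real Filter

noncomputable def robinRQ (L α : ℝ) (f : ℝ → ℝ) : ℝ :=
  ((∫ x in (0:ℝ)..L, (deriv f x) ^ 2) + α * (f 0) ^ 2 + α * (f L) ^ 2) /
    (∫ x in (0:ℝ)..L, (f x) ^ 2)

def robinSet (L α : ℝ) : Set ℝ :=
  { r | ∃ f : ℝ → ℝ, ContDiff ℝ 1 f ∧ (∫ x in (0:ℝ)..L, (f x) ^ 2) ≠ 0 ∧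
      r = robinRQ L α f }

/-- First Robin eigenvalue of the interval `[0, L]` with parameter `α` at both
endpoints, via the variational (Rayleigh quotient) characterisation. -/
noncomputable def robinEV (L α : ℝ) : ℝ := sInf (robinSet L α)

set_option maxHeartbeats 1600000 in
/-- The key integral inequality: for any `C¹` function `f`,
`c ∫ f² ≤ ∫ f'² + α f(0)² + α f(L)²` where `c = απ²/(L(π²+αL))`. -/
lemma robin_key (L α : ℝ) (hL : 0 < L) (hα : 0 < α) (f : ℝ → ℝ)
    (hf : ContDiff ℝ 1 f) :
    α * π ^ 2 / (L * (π ^ 2 + α * L)) * (∫ x in (0:ℝ)..L, (f x) ^ 2) ≤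
      (∫ x in (0:ℝ)..L, (deriv f x) ^ 2) + α * (f 0) ^ 2 + α * (f L) ^ 2 := by
  have hπ : (0:ℝ) < π := pi_pos
  have hS : (0:ℝ) < π ^ 2 + α * L := by positivity
  set c : ℝ := α * π ^ 2 / (L * (π ^ 2 + α * L)) with hc_def
  have hc : 0 < c := by positivity
  set b : ℝ := Real.sqrt c with hb_def
  have hb : 0 < b := Real.sqrt_pos.mpr hc
  have hb2 : b ^ 2 = c := Real.sq_sqrt hc.le
  have hcLS : c * L * (π ^ 2 + α * L) = α * π ^ 2 := by
    rw [hc_def]; field_simp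
  set t : ℝ := b * L / 2 with ht_def
  have ht0 : 0 < t := by positivity
  have ht2 : 4 * t ^ 2 * (π ^ 2 + α * L) = α * π ^ 2 * L := by
    have h1 : 4 * t ^ 2 = c * L ^ 2 := by rw [ht_def]; rw [← hb2]; ring
    nlinarith [hcLS]
  have h4t : 4 * t ^ 2 < π ^ 2 := by
    nlinarith [ht2, hS, mul_pos hα hL, pow_pos hπ 4, sq_nonneg π]
  have htπ : t < π / 2 := by nlinarith [h4t, ht0]
  -- boundary estimate : b * tan t ≤ α
  have hcost : 0 < Real.cos t := Real.cos_pos_of_mem_Ioo ⟨by linarith, htπ⟩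
  have hsin : Real.sin t ≤ t := Real.sin_le ht0.le
  have hjordan : 1 - 2 / π * t ≤ Real.cos t := Real.one_sub_mul_le_cos ht0.le htπ.le
  have claim2 : 4 * t * (π ^ 2 + α * L) ≤ π * (π ^ 2 + 2 * α * L) := by
    have h4 : (4 * t * (π ^ 2 + α * L)) ^ 2 ≤ (π * (π ^ 2 + 2 * α * L)) ^ 2 := by
      nlinarith [ht2, sq_nonneg (π ^ 2), mul_pos hα hL, sq_nonneg π]
    have h5 := Real.sqrt_le_sqrt h4
    rwa [Real.sqrt_sq (by positivity), Real.sqrt_sq (by positivity)] at h5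
  have hbt : b * t = c * L / 2 := by rw [ht_def, ← hb2]; ring
  have hkey : b * Real.tan t ≤ α := by
    have htan : Real.tan t ≤ t / Real.cos t := by
      rw [Real.tan_eq_sin_div_cos]
      exact (div_le_div_iff_of_pos_right hcost).mpr hsin
    have h6 : c * L * π ≤ 2 * α * (π - 2 * t) := by
      nlinarith [hcLS, claim2, hα, hπ, hS]
    have h7 : c * L / 2 ≤ α * (1 - 2 / π * t) := by
      rw [show α * (1 - 2 / π * t) = 2 * α * (π - 2 * t) / (2 * π) by field_simp,
        le_div_iff₀ (by positivity)]
      nlinarith [h6, hπ]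
    have h8 : α * (1 - 2 / π * t) ≤ α * Real.cos t :=
      mul_le_mul_of_nonneg_left hjordan hα.le
    calc b * Real.tan t ≤ b * (t / Real.cos t) := mul_le_mul_of_nonneg_left htan hb.le
      _ = b * t / Real.cos t := by ring
      _ = c * L / 2 / Real.cos t := by rw [hbt]
      _ ≤ α := by rw [div_le_iff₀ hcost]; linarith [h7, h8]
  -- the Riccati substitution
  set w : ℝ → ℝ := fun x => -(b * Real.tan (b * (x - L / 2))) with hw_def
  have huIcc : Set.uIcc (0:ℝ) L = Set.Icc 0 L := Set.uIcc_of_le hL.le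
  have hmem : ∀ x ∈ Set.Icc (0:ℝ) L, 0 < Real.cos (b * (x - L / 2)) := by
    intro x hx
    apply Real.cos_pos_of_mem_Ioo
    constructor
    · have h1 : -t ≤ b * (x - L / 2) := by rw [ht_def]; nlinarith [hx.1, hb]
      linarith
    · have h1 : b * (x - L / 2) ≤ t := by rw [ht_def]; nlinarith [hx.2, hb]
      linarith
  have hw_deriv : ∀ x ∈ Set.Icc (0:ℝ) L, HasDerivAt w (-(c + w x ^ 2)) x := by
    intro x hx
    have hcx : Real.cos (b * (x - L / 2)) ≠ 0 := (hmem x hx).ne'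
    have h1 : HasDerivAt (fun y : ℝ => b * (y - L / 2)) b x := by
      simpa using ((hasDerivAt_id x).sub_const (L / 2)).const_mul b
    have h2 := (Real.hasDerivAt_tan hcx).comp x h1
    have h3 : HasDerivAt w (-(b * (1 / Real.cos (b * (x - L / 2)) ^ 2 * b))) x := by
      exact (h2.const_mul b).neg
    convert h3 using 1
    have h4 : (1 + Real.tan (b * (x - L / 2)) ^ 2)⁻¹ = Real.cos (b * (x - L / 2)) ^ 2 :=
      Real.inv_one_add_tan_sq hcx
    have hcx2 : Real.cos (b * (x - L / 2)) ^ 2 ≠ 0 := pow_ne_zero _ hcx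
    have h5 : 1 / Real.cos (b * (x - L / 2)) ^ 2 = 1 + Real.tan (b * (x - L / 2)) ^ 2 := by
      rw [one_div, ← h4, inv_inv]
    rw [h5]
    simp only [hw_def]
    rw [← hb2]; ring
  have hw_cont : ContinuousOn w (Set.uIcc 0 L) := by
    rw [huIcc]
    exact fun x hx => ((hw_deriv x hx).continuousAt).continuousWithinAt
  have hfc : Continuous f := hf.continuous
  have hf'c : Continuous (deriv f) := hf.continuous_deriv le_rfl
  have hig1 : IntervalIntegrable (fun x => (deriv f x) ^ 2) volume 0 L :=
    (hf'c.pow 2).intervalIntegrable 0 L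
  have hig2 : IntervalIntegrable
      (fun x => -(c + w x ^ 2) * f x ^ 2 + w x * (2 * f x * deriv f x)) volume 0 L := by
    apply ContinuousOn.intervalIntegrable
    exact (((continuousOn_const.add (hw_cont.pow 2)).neg.mul
      ((hfc.pow 2).continuousOn)).add
      (hw_cont.mul (((continuous_const.mul hfc).mul hf'c).continuousOn)))
  have hig3 : IntervalIntegrable (fun x => c * f x ^ 2) volume 0 L :=
    (continuous_const.mul (hfc.pow 2)).intervalIntegrable 0 L
  have hFTC : (∫ x in (0:ℝ)..L, (-(c + w x ^ 2) * f x ^ 2 + w x * (2 * f x * deriv f x)))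
      = w L * f L ^ 2 - w 0 * f 0 ^ 2 := by
    apply intervalIntegral.integral_eq_sub_of_hasDerivAt
    · intro x hx
      rw [huIcc] at hx
      have hfx : HasDerivAt f (deriv f x) x := (hf.differentiable one_ne_zero x).hasDerivAt
      have hfx2 : HasDerivAt (fun y => f y ^ 2) (2 * f x * deriv f x) x := by
        exact (hfx.pow 2).congr_deriv (by norm_num)
      exact (hw_deriv x hx).mul hfx2
    · exact hig2
  have hsq : 0 ≤ ∫ x in (0:ℝ)..L, (deriv f x - w x * f x) ^ 2 :=
    intervalIntegral.integral_nonneg hL.le fun u _ => sq_nonneg _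
  have hsplit : (∫ x in (0:ℝ)..L, (deriv f x - w x * f x) ^ 2)
      = (∫ x in (0:ℝ)..L, (deriv f x) ^ 2)
        - (∫ x in (0:ℝ)..L, (-(c + w x ^ 2) * f x ^ 2 + w x * (2 * f x * deriv f x)))
        - c * ∫ x in (0:ℝ)..L, f x ^ 2 := by
    rw [← intervalIntegral.integral_const_mul,
      ← intervalIntegral.integral_sub hig1 hig2,
      ← intervalIntegral.integral_sub (hig1.sub hig2) hig3]
    exact intervalIntegral.integral_congr fun x _ => by ring
  have hw0 : w 0 = b * Real.tan t := by
    simp only [hw_def]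
    rw [show b * ((0:ℝ) - L / 2) = -(b * L / 2) by ring, Real.tan_neg, ht_def]
    ring
  have hwL : w L = -(b * Real.tan t) := by
    simp only [hw_def]
    rw [show b * (L - L / 2) = b * L / 2 by ring, ht_def]
  rw [hsplit, hFTC, hw0, hwL] at hsq
  nlinarith [hsq, mul_nonneg (sub_nonneg.mpr hkey) (sq_nonneg (f 0)),
    mul_nonneg (sub_nonneg.mpr hkey) (sq_nonneg (f L))]

theorem robinEV_lower_bound (L α : ℝ) (hL : 0 < L) (hα : 0 < α) :
    α * π ^ 2 / (L * (π ^ 2 + α * L)) ≤ robinEV L α := by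
  have hne : (robinSet L α).Nonempty := by
    refine ⟨robinRQ L α fun _ => 1, fun _ => (1:ℝ), contDiff_const, ?_, rfl⟩
    simp [hL.ne']
  apply le_csInf hne
  rintro r ⟨f, hf, hD, rfl⟩
  have hDpos : 0 < ∫ x in (0:ℝ)..L, f x ^ 2 :=
    lt_of_le_of_ne (intervalIntegral.integral_nonneg hL.le fun u _ => sq_nonneg _) (Ne.symm hD)
  rw [robinRQ, le_div_iff₀ hDpos]
  exact robin_key L α hL hα f hf
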